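/- Let v_0,...,v_k span ℝ^n with 0 in the interior of their convex hull Σ, let v ≠ 0 with -t₀ v ∈ ∂Σ where t₀ = sup{t ≥ 0 : -tv ∈ Σ}, and set r = t₀ (so r = |w_v|/|v| where w_v = -t₀v). Then sup{α ∈ (0,1) : ∫_{ℝ^n} e^{-α⟨v,y⟩}/(∑_i e^{⟨v_i,y⟩})^{1-α} dy < ∞} = r/(1+r). -/

import Mathlib

/-!
Write `q_p(y) = exp ⟪p, y⟫ / ∑ᵢ exp ⟪vᵢ, y⟫`; the integrand is `q_p ^ (1 - α)` for
`p = -(α / (1 - α)) • v`. Since `log ∑ᵢ exp ⟪vᵢ, y⟫` dominates the support function of `Σ`, a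
ball of radius `ε` around `p` inside `Σ` gives `q_p(y) ≤ exp (-ε ‖y‖)`, hence integrability.
If `p ∉ int Σ`, a supporting hyperplane gives `w ≠ 0` with `⟪vᵢ, w⟫ ≤ ⟪p, w⟫` for all `i`, so
`q_p` is nondecreasing in the direction `w` and stays above a positive constant on infinitely many
disjoint translates of a ball. Since `-γ • v ∈ int Σ` exactly for `0 ≤ γ < r`, the integral is
finite iff `α / (1 - α) < r`.
-/

open MeasureTheory Metric Real Set Filter Topology Function
open scoped InnerProductSpace Nat ENNReal

lemma exp_neg_mul_le_mul_one_add_rpow_neg (m : ℕ) {c t : ℝ} (hc : 0 < c) (ht : 0 ≤ t) :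
    exp (-(c * t)) ≤ exp c * m ! / c ^ m * (1 + t) ^ (-(m : ℝ)) := by
  have h1t : 0 < 1 + t := by linarith
  rw [rpow_neg h1t.le, rpow_natCast]
  calc exp (-(c * t)) = exp c / exp (c * (1 + t)) := by rw [← exp_sub]; ring_nf
    _ ≤ exp c / ((c * (1 + t)) ^ m / m !) := by
      gcongr
      exact pow_div_factorial_le_exp _ (by positivity) m
    _ = _ := by rw [mul_pow]; field_simp

section AddHaar

variable {E : Type*} [NormedAddCommGroup E] [NormedSpace ℝ E] [MeasurableSpace E] [BorelSpace E]
  (μ : Measure E) [μ.IsAddHaarMeasure]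

lemma integrable_exp_neg_mul_norm [FiniteDimensional ℝ E] {c : ℝ} (hc : 0 < c) :
    Integrable (fun x : E => exp (-(c * ‖x‖))) μ := by
  let m := Module.finrank ℝ E + 1
  have hm : (Module.finrank ℝ E : ℝ) < m := by exact_mod_cast Nat.lt_succ_self _
  refine ((integrable_one_add_norm hm).const_mul (exp c * m ! / c ^ m)).mono' (by fun_prop)
    (ae_of_all _ fun x => ?_)
  rw [norm_of_nonneg (exp_pos _).le]
  exact exp_neg_mul_le_mul_one_add_rpow_neg m hc (norm_nonneg x)

lemma measure_iUnion_ball_add_smul_eq_top {x d : E} {r : ℝ} (hr : 0 < r) (hd : 2 * r ≤ ‖d‖) :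
    μ (⋃ m : ℕ, ball (x + (m : ℝ) • d) r) = ∞ := by
  have hdisj : Pairwise (Disjoint on fun m : ℕ => ball (x + (m : ℝ) • d) r) := by
    intro m m' hmm'
    apply ball_disjoint_ball
    have hm : (1 : ℝ) ≤ |(m : ℝ) - m'| := by
      have := Int.one_le_abs (sub_ne_zero.mpr (Int.ofNat_inj.not.mpr hmm'))
      exact_mod_cast this
    rw [dist_add_left, dist_eq_norm, ← sub_smul, norm_smul, Real.norm_eq_abs]
    nlinarith [norm_nonneg d]
  rw [measure_iUnion hdisj fun _ => measurableSet_ball]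
  simp only [Measure.addHaar_ball_center]
  exact ENNReal.tsum_const_eq_top_of_ne_zero (measure_ball_pos μ _ hr).ne'

lemma not_integrable_of_le_add_smul {f : E → ℝ} (hf : Continuous f) {x u : E} (hfx : 0 < f x)
    (hu : u ≠ 0) (hmono : ∀ y (t : ℝ), 0 ≤ t → f y ≤ f (y + t • u)) : ¬ Integrable f μ := by
  intro hint
  obtain ⟨r, hr, hball⟩ : ∃ r > 0, ∀ y ∈ ball x r, f x / 2 < f y :=
    eventually_nhds_iff_ball.mp (continuousAt_const.eventually_lt hf.continuousAt
      (half_lt_self hfx))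
  have hu' : 0 < ‖u‖ := norm_pos_iff.mpr hu
  set d := (2 * r / ‖u‖) • u
  have hd : ‖d‖ = 2 * r := by
    rw [norm_smul, norm_div, norm_norm, Real.norm_of_nonneg (by positivity)]; field_simp
  have hsub : (⋃ m : ℕ, ball (x + (m : ℝ) • d) r) ⊆ {y | f x / 2 ≤ ‖f y‖} := by
    simp only [iUnion_subset_iff]
    intro m y hy
    have hy' : y - (m : ℝ) • d ∈ ball x r := by
      rwa [mem_ball, dist_sub_eq_dist_add_left]
    calc f x / 2 ≤ f (y - (m : ℝ) • d) := (hball _ hy').le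
      _ ≤ f (y - (m : ℝ) • d + ((m : ℝ) * (2 * r / ‖u‖)) • u) := hmono _ _ (by positivity)
      _ = f y := by rw [mul_smul, sub_add_cancel]
      _ ≤ ‖f y‖ := le_norm_self _
  exact (hint.measure_norm_ge_lt_top (half_pos hfx)).ne
    (measure_mono_top hsub (measure_iUnion_ball_add_smul_eq_top μ hr hd.ge))

end AddHaar

lemma exists_ne_zero_forall_inner_le_of_notMem_interior {E : Type*} [NormedAddCommGroup E]
    [InnerProductSpace ℝ E] [CompleteSpace E] {C : Set E} {p : E} (hC : Convex ℝ C)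
    (hint : (interior C).Nonempty) (hp : p ∉ interior C) :
    ∃ w ≠ 0, ∀ x ∈ C, ⟪x, w⟫_ℝ ≤ ⟪p, w⟫_ℝ := by
  obtain ⟨f, u, hf0, hfC, hfp⟩ := geometric_hahn_banach_of_nonempty_interior hC
    (convex_singleton p) (disjoint_singleton_right.mpr hp) hint (singleton_nonempty p)
  refine ⟨(InnerProductSpace.toDual ℝ E).symm f, by simpa using hf0, fun x hx => ?_⟩
  rw [real_inner_comm, real_inner_comm _ p, InnerProductSpace.toDual_symm_apply,
    InnerProductSpace.toDual_symm_apply]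
  exact (hfC x hx).trans (hfp p rfl)

section ExpRatio

variable {E ι : Type*} [NormedAddCommGroup E] [InnerProductSpace ℝ E] [Fintype ι]

noncomputable def expRatio (vs : ι → E) (p y : E) : ℝ := exp ⟪p, y⟫_ℝ / ∑ i, exp ⟪vs i, y⟫_ℝ

variable (vs : ι → E)

lemma sum_exp_inner_pos [Nonempty ι] (y : E) : 0 < ∑ i, exp ⟪vs i, y⟫_ℝ :=
  Finset.sum_pos (fun _ _ => exp_pos _) Finset.univ_nonempty

lemma expRatio_pos [Nonempty ι] (p y : E) : 0 < expRatio vs p y :=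
  div_pos (exp_pos _) (sum_exp_inner_pos vs y)

lemma continuous_expRatio [Nonempty ι] (p : E) : Continuous (expRatio vs p) :=
  Continuous.div (by fun_prop) (by fun_prop) fun y => (sum_exp_inner_pos vs y).ne'

lemma inner_le_log_sum_exp_of_mem_convexHull [Nonempty ι] {x : E}
    (hx : x ∈ convexHull ℝ (range vs)) (y : E) :
    ⟪x, y⟫_ℝ ≤ log (∑ i, exp ⟪vs i, y⟫_ℝ) := by
  refine convexHull_min (t := {z | ⟪z, y⟫_ℝ ≤ _}) ?_
    (convex_halfSpace_le ((innerₛₗ ℝ).flip y).isLinear _) hx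
  rintro _ ⟨i, rfl⟩
  show ⟪vs i, y⟫_ℝ ≤ _
  rw [le_log_iff_exp_le (sum_exp_inner_pos vs y)]
  exact Finset.single_le_sum (f := fun j => exp ⟪vs j, y⟫_ℝ) (fun _ _ => (exp_pos _).le)
    (Finset.mem_univ i)

lemma expRatio_le_exp_neg_mul_norm [Nonempty ι] {p : E} {ε : ℝ} (hε : 0 ≤ ε)
    (hball : closedBall p ε ⊆ convexHull ℝ (range vs)) (y : E) :
    expRatio vs p y ≤ exp (-(ε * ‖y‖)) := by
  have hx : p + (ε / ‖y‖) • y ∈ convexHull ℝ (range vs) := by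
    refine hball ?_
    rw [mem_closedBall, dist_self_add_left, norm_smul, norm_div, norm_norm,
      Real.norm_of_nonneg hε]
    rcases eq_or_ne ‖y‖ 0 with h | h <;> simp [h, hε]
  have hinner : ⟪p + (ε / ‖y‖) • y, y⟫_ℝ = ⟪p, y⟫_ℝ + ε * ‖y‖ := by
    rw [inner_add_left, real_inner_smul_left, real_inner_self_eq_norm_sq]
    rcases eq_or_ne ‖y‖ 0 with h | h <;> field_simp [h]
  have hlog := inner_le_log_sum_exp_of_mem_convexHull vs hx y
  have hpos := sum_exp_inner_pos vs y
  rw [expRatio, div_le_iff₀ hpos, ← exp_log hpos, ← exp_add]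
  exact exp_le_exp.mpr (by linarith)

lemma expRatio_le_expRatio_add [Nonempty ι] {p u : E} (hu : ∀ i, ⟪vs i, u⟫_ℝ ≤ ⟪p, u⟫_ℝ)
    (y : E) : expRatio vs p y ≤ expRatio vs p (y + u) := by
  have hsum : ∑ i, exp ⟪vs i, y + u⟫_ℝ ≤ exp ⟪p, u⟫_ℝ * ∑ i, exp ⟪vs i, y⟫_ℝ := by
    rw [Finset.mul_sum]
    gcongr with i
    rw [inner_add_right, exp_add, mul_comm]
    gcongr
    exact hu i
  calc expRatio vs p y = exp ⟪p, y + u⟫_ℝ / (exp ⟪p, u⟫_ℝ * ∑ i, exp ⟪vs i, y⟫_ℝ) := by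
        rw [expRatio, inner_add_right, exp_add, mul_comm (exp ⟪p, y⟫_ℝ),
          mul_div_mul_left _ _ (exp_pos _).ne']
    _ ≤ expRatio vs p (y + u) :=
        div_le_div_of_nonneg_left (exp_pos _).le (sum_exp_inner_pos vs _) hsum

lemma exp_neg_mul_inner_div_rpow_eq {α : ℝ} (hα : α < 1) (v y : E) :
    exp (-α * ⟪v, y⟫_ℝ) / (∑ i, exp ⟪vs i, y⟫_ℝ) ^ (1 - α)
      = expRatio vs ((α / (1 - α)) • -v) y ^ (1 - α) := by
  rw [expRatio, div_rpow (exp_pos _).le (Finset.sum_nonneg fun _ _ => (exp_pos _).le),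
    ← exp_mul, real_inner_smul_left, inner_neg_left]
  congr 2
  field_simp [(sub_pos.mpr hα).ne']

end ExpRatio

theorem integrable_expRatio_rpow_iff {E ι : Type*} [NormedAddCommGroup E]
    [InnerProductSpace ℝ E] [FiniteDimensional ℝ E] [MeasurableSpace E] [BorelSpace E]
    (μ : Measure E) [μ.IsAddHaarMeasure] [Fintype ι] [Nonempty ι] (vs : ι → E) {p : E} {s : ℝ}
    (hs : 0 < s) (hint : (interior (convexHull ℝ (range vs))).Nonempty) :
    Integrable (fun y => expRatio vs p y ^ s) μ ↔ p ∈ interior (convexHull ℝ (range vs)) := by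
  have hcont : Continuous (fun y => expRatio vs p y ^ s) :=
    (continuous_expRatio vs p).rpow_const fun _ => Or.inr hs.le
  constructor
  · intro hi
    by_contra hp
    obtain ⟨w, hw, hsep⟩ :=
      exists_ne_zero_forall_inner_le_of_notMem_interior (convex_convexHull ℝ _) hint hp
    refine not_integrable_of_le_add_smul μ hcont (x := 0)
      (rpow_pos_of_pos (expRatio_pos vs p 0) s) hw (fun y t ht => ?_) hi
    refine rpow_le_rpow (expRatio_pos vs p y).le
      (expRatio_le_expRatio_add vs (fun i => ?_) y) hs.le
    rw [real_inner_smul_right, real_inner_smul_right]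
    exact mul_le_mul_of_nonneg_left (hsep _ (subset_convexHull ℝ _ (mem_range_self i))) ht
  · intro hp
    obtain ⟨ε, hε, hball⟩ := nhds_basis_closedBall.mem_iff.mp (mem_interior_iff_mem_nhds.mp hp)
    refine (integrable_exp_neg_mul_norm μ (mul_pos hs hε)).mono' hcont.aestronglyMeasurable
      (ae_of_all _ fun y => ?_)
    rw [norm_of_nonneg (rpow_nonneg (expRatio_pos vs p y).le _)]
    calc expRatio vs p y ^ s ≤ exp (-(ε * ‖y‖)) ^ s :=
          rpow_le_rpow (expRatio_pos vs p y).le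
            (expRatio_le_exp_neg_mul_norm vs hε.le hball y) hs.le
      _ = exp (-(s * ε * ‖y‖)) := by rw [← exp_mul]; ring_nf

lemma Convex.smul_mem_interior_iff_lt_sSup {E : Type*} [AddCommGroup E] [Module ℝ E]
    [TopologicalSpace E] [IsTopologicalAddGroup E] [ContinuousSMul ℝ E] {C : Set E}
    (hC : Convex ℝ C) (h0 : (0 : E) ∈ interior C) {u : E}
    (hbdd : BddAbove {t : ℝ | 0 ≤ t ∧ t • u ∈ C}) {γ : ℝ} (hγ : 0 ≤ γ) :
    γ • u ∈ interior C ↔ γ < sSup {t : ℝ | 0 ≤ t ∧ t • u ∈ C} := by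
  constructor
  · intro hγu
    have hnear : ∀ᶠ t in 𝓝 γ, t • u ∈ C :=
      (continuous_id.smul continuous_const).continuousAt.preimage_mem_nhds
        (mem_interior_iff_mem_nhds.mp hγu)
    obtain ⟨t, htC, hγt⟩ :=
      ((hnear.filter_mono (nhdsWithin_le_nhds (s := Ioi γ))).and self_mem_nhdsWithin).exists
    exact hγt.trans_le (le_csSup hbdd ⟨hγ.trans hγt.le, htC⟩)
  · intro hγt
    have hzero : (0 : ℝ) ∈ {t : ℝ | 0 ≤ t ∧ t • u ∈ C} :=
      ⟨le_rfl, by simpa using interior_subset h0⟩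
    obtain ⟨t, ⟨-, htC⟩, hγt⟩ := exists_lt_of_lt_csSup ⟨0, hzero⟩ hγt
    have ht : 0 < t := hγ.trans_lt hγt
    have hcombo := hC.combo_interior_self_mem_interior h0 htC
      (sub_pos.mpr ((div_lt_one ht).mpr hγt)) (div_nonneg hγ ht.le) (sub_add_cancel _ _)
    rwa [smul_zero, zero_add, smul_smul, div_mul_cancel₀ _ ht.ne'] at hcombo

lemma bddAbove_setOf_smul_mem {E : Type*} [NormedAddCommGroup E] [NormedSpace ℝ E] {C : Set E}
    (hC : Bornology.IsBounded C) {u : E} (hu : u ≠ 0) :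
    BddAbove {t : ℝ | 0 ≤ t ∧ t • u ∈ C} := by
  obtain ⟨R, hR⟩ := hC.subset_closedBall 0
  refine ⟨R / ‖u‖, fun t ⟨ht0, htC⟩ => ?_⟩
  have htR := hR htC
  rw [mem_closedBall_zero_iff, norm_smul, norm_of_nonneg ht0] at htR
  exact (le_div_iff₀ (norm_pos_iff.mpr hu)).mpr htR

lemma div_one_sub_lt_iff_lt_div_one_add {α r : ℝ} (hα : α < 1) (hr : 0 ≤ r) :
    α / (1 - α) < r ↔ α < r / (1 + r) := by
  rw [div_lt_iff₀ (by linarith), lt_div_iff₀ (by linarith)]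
  constructor <;> intro h <;> linarith

theorem integrable_exp_neg_mul_inner_div_rpow_iff {E ι : Type*} [NormedAddCommGroup E]
    [InnerProductSpace ℝ E] [FiniteDimensional ℝ E] [MeasurableSpace E] [BorelSpace E]
    (μ : Measure E) [μ.IsAddHaarMeasure] [Fintype ι] [Nonempty ι] (vs : ι → E) (v : E) {α : ℝ}
    (hα : α ∈ Ioo (0 : ℝ) 1) (hint : (interior (convexHull ℝ (range vs))).Nonempty) :
    Integrable (fun y => exp (-α * ⟪v, y⟫_ℝ) / (∑ i, exp ⟪vs i, y⟫_ℝ) ^ (1 - α)) μ ↔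
      (α / (1 - α)) • -v ∈ interior (convexHull ℝ (range vs)) := by
  simp only [exp_neg_mul_inner_div_rpow_eq vs hα.2]
  exact integrable_expRatio_rpow_iff μ vs (sub_pos.mpr hα.2) hint

theorem stmt_15_general {n k : ℕ} (vs : Fin (k + 1) → EuclideanSpace ℝ (Fin n))
    (S : Set (EuclideanSpace ℝ (Fin n))) (hS : S = convexHull ℝ (Set.range vs))
    (h0 : (0 : EuclideanSpace ℝ (Fin n)) ∈ interior S)
    (v : EuclideanSpace ℝ (Fin n)) (hv : v ≠ 0)
    (t₀ : ℝ) (ht₀ : t₀ = sSup {t : ℝ | 0 ≤ t ∧ -t • v ∈ S})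
    (r : ℝ) (hr : r = t₀) :
    sSup {α : ℝ | α ∈ Set.Ioo (0 : ℝ) 1 ∧
        Integrable (fun y : EuclideanSpace ℝ (Fin n) =>
          Real.exp (-α * (inner ℝ v y : ℝ)) /
            (∑ i, Real.exp (inner ℝ (vs i) y : ℝ)) ^ (1 - α))}
      = r / (1 + r) := by
  subst hS hr
  have hbdd := bddAbove_setOf_smul_mem
    ((finite_range vs).isCompact_convexHull (𝕜 := ℝ)).isBounded (neg_ne_zero.mpr hv)
  have hray : ∀ γ : ℝ, 0 ≤ γ → (γ • -v ∈ interior (convexHull ℝ (range vs)) ↔ γ < r) := by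
    simp only [ht₀, neg_smul, ← smul_neg]
    exact fun γ hγ => (convex_convexHull ℝ _).smul_mem_interior_iff_lt_sSup h0 hbdd hγ
  have hr0 : 0 < r := (hray 0 le_rfl).mp (by simpa using h0)
  have hbound : r / (1 + r) < 1 := (div_lt_one (by linarith)).mpr (by linarith)
  have hmem : ∀ α ∈ Ioo (0 : ℝ) 1,
      ((α / (1 - α)) • -v ∈ interior (convexHull ℝ (range vs)) ↔ α < r / (1 + r)) :=
    fun α hα => (hray _ (div_nonneg hα.1.le (sub_pos.mpr hα.2).le)).trans
      (div_one_sub_lt_iff_lt_div_one_add hα.2 hr0.le)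
  refine (congrArg sSup ?_).trans (csSup_Ioo (by positivity : 0 < r / (1 + r)))
  ext α
  constructor
  · rintro ⟨hα, hi⟩
    exact ⟨hα.1, (hmem α hα).mp
      ((integrable_exp_neg_mul_inner_div_rpow_iff volume vs v hα ⟨0, h0⟩).mp hi)⟩
  · rintro ⟨hα0, hαr⟩
    have hα : α ∈ Ioo (0 : ℝ) 1 := ⟨hα0, hαr.trans hbound⟩
    exact ⟨hα, (integrable_exp_neg_mul_inner_div_rpow_iff volume vs v hα ⟨0, h0⟩).mpr
      ((hmem α hα).mpr hαr)⟩

theorem stmt_15 {n k : ℕ} (vs : Fin (k + 1) → EuclideanSpace ℝ (Fin n))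
    (S : Set (EuclideanSpace ℝ (Fin n))) (hS : S = convexHull ℝ (Set.range vs))
    (h0 : (0 : EuclideanSpace ℝ (Fin n)) ∈ interior S)
    (hspan : Submodule.span ℝ (Set.range vs) = ⊤)
    (v : EuclideanSpace ℝ (Fin n)) (hv : v ≠ 0)
    (t₀ : ℝ) (ht₀ : t₀ = sSup {t : ℝ | 0 ≤ t ∧ -t • v ∈ S})
    (hbd : -t₀ • v ∈ frontier S)
    (r : ℝ) (hr : r = t₀) :
    sSup {α : ℝ | α ∈ Set.Ioo (0 : ℝ) 1 ∧
        Integrable (fun y : EuclideanSpace ℝ (Fin n) =>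
          Real.exp (-α * (inner ℝ v y : ℝ)) /
            (∑ i, Real.exp (inner ℝ (vs i) y : ℝ)) ^ (1 - α))}
      = r / (1 + r) :=
  stmt_15_general vs S hS h0 v hv t₀ ht₀ r hr
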